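/- For c > 0 and integers 1 ≤ r ≤ l define I_{l,r}(c) := (c^{r-1}/(2l-r-1)!) ∫_0^∞ (σ + c) σ^{2l-r-1} exp(−σ²/2 − cσ) dσ. Then for every integer l ≥ 2 and every 1 ≤ r ≤ l - 1, (2l - r - 2)·I_{l,r}(c) + I_{l,r+1}(c) = I_{l-1,r}(c). -/

import Mathlib

/-!
Write `J_m(c) = ∫₀^∞ σ^m e^{-σ²/2 - cσ} dσ`. Since `(σ + c) e^{-σ²/2 - cσ}` is minus the
derivative of the weight, integration by parts gives `∫₀^∞ (σ + c) σ^(n+1) e^{-σ²/2 - cσ} dσ =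
(n + 1) J_n`, hence `I_{l,r} = c^(r-1) J_n / n!` with `n = 2l - r - 2`. Expanding `σ + c` instead
gives `I_{l-1,r} = c^(r-1) (J_{m+1} + c J_m) / m!` with `m = 2l - r - 3`, and the recursion
reduces to `(m + 1) J_{m+1} / (m + 1)! + c J_m / m! = (J_{m+1} + c J_m) / m!`.
The weight is at most `e^{1+c²} e^{-σ}`, so every moment converges, for every real `c`.
-/

open MeasureTheory

/-- `I l r c` : the limiting probability of a fixed bouquet configuration with
`r` binary trees spanning `l` marked vertices, in the critical regime `κ = c√N`. -/
noncomputable def I (l r : ℕ) (c : ℝ) : ℝ :=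
  (c ^ (r - 1) / (Nat.factorial (2 * l - r - 1) : ℝ)) *
    ∫ σ in Set.Ioi (0 : ℝ),
      (σ + c) * σ ^ (2 * l - r - 1) * Real.exp (-σ ^ 2 / 2 - c * σ)

open Set Filter Real
open scoped Nat

noncomputable def weightedMoment (m : ℕ) (c : ℝ) : ℝ :=
  ∫ σ in Ioi (0 : ℝ), σ ^ m * exp (-σ ^ 2 / 2 - c * σ)

lemma exp_neg_sq_div_two_sub_mul_le (c σ : ℝ) :
    exp (-σ ^ 2 / 2 - c * σ) ≤ exp (1 + c ^ 2) * exp (-σ) := by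
  rw [← exp_add]
  exact exp_le_exp.2 (by nlinarith [sq_nonneg (σ + c - 1), sq_nonneg (c + 1)])

lemma integrableOn_pow_mul_exp_neg_sq_div_two_sub_mul (m : ℕ) (c : ℝ) :
    IntegrableOn (fun σ : ℝ => σ ^ m * exp (-σ ^ 2 / 2 - c * σ)) (Ioi 0) := by
  have hGamma : IntegrableOn (fun σ : ℝ => exp (-σ) * σ ^ m) (Ioi 0) := by
    refine (GammaIntegral_convergent (s := m + 1) (by positivity)).congr_fun
      (fun σ _ => ?_) measurableSet_Ioi
    simp only [add_sub_cancel_right, rpow_natCast]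
  refine Integrable.mono' (hGamma.const_mul (exp (1 + c ^ 2))) (by fun_prop) ?_
  filter_upwards [ae_restrict_mem measurableSet_Ioi] with σ (hσ : 0 < σ)
  rw [norm_mul, norm_of_nonneg (by positivity), norm_of_nonneg (exp_pos _).le]
  calc σ ^ m * exp (-σ ^ 2 / 2 - c * σ) ≤ σ ^ m * (exp (1 + c ^ 2) * exp (-σ)) :=
        mul_le_mul_of_nonneg_left (exp_neg_sq_div_two_sub_mul_le c σ) (by positivity)
    _ = exp (1 + c ^ 2) * (exp (-σ) * σ ^ m) := by ring

lemma tendsto_pow_mul_exp_neg_sq_div_two_sub_mul_atTop (k : ℕ) (c : ℝ) :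
    Tendsto (fun σ : ℝ => σ ^ k * exp (-σ ^ 2 / 2 - c * σ)) atTop (nhds 0) := by
  have hdecay := (tendsto_pow_mul_exp_neg_atTop_nhds_zero k).const_mul (exp (1 + c ^ 2))
  rw [mul_zero] at hdecay
  refine squeeze_zero' ?_ ?_ hdecay
  · filter_upwards [eventually_ge_atTop 0] with σ hσ
    positivity
  · filter_upwards [eventually_ge_atTop 0] with σ hσ
    calc σ ^ k * exp (-σ ^ 2 / 2 - c * σ) ≤ σ ^ k * (exp (1 + c ^ 2) * exp (-σ)) :=
          mul_le_mul_of_nonneg_left (exp_neg_sq_div_two_sub_mul_le c σ) (by positivity)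
      _ = exp (1 + c ^ 2) * (σ ^ k * exp (-σ)) := by ring

lemma add_mul_pow_mul_exp_eq (m : ℕ) (c σ : ℝ) :
    (σ + c) * σ ^ m * exp (-σ ^ 2 / 2 - c * σ)
      = σ ^ (m + 1) * exp (-σ ^ 2 / 2 - c * σ) + c * (σ ^ m * exp (-σ ^ 2 / 2 - c * σ)) := by
  ring

lemma integrableOn_add_mul_pow_mul_exp (m : ℕ) (c : ℝ) :
    IntegrableOn (fun σ : ℝ => (σ + c) * σ ^ m * exp (-σ ^ 2 / 2 - c * σ)) (Ioi 0) := by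
  simp only [add_mul_pow_mul_exp_eq]
  exact (integrableOn_pow_mul_exp_neg_sq_div_two_sub_mul (m + 1) c).add
    ((integrableOn_pow_mul_exp_neg_sq_div_two_sub_mul m c).const_mul c)

lemma setIntegral_add_mul_pow_mul_exp (m : ℕ) (c : ℝ) :
    ∫ σ in Ioi (0 : ℝ), (σ + c) * σ ^ m * exp (-σ ^ 2 / 2 - c * σ)
      = weightedMoment (m + 1) c + c * weightedMoment m c := by
  simp only [add_mul_pow_mul_exp_eq]
  rw [integral_add (integrableOn_pow_mul_exp_neg_sq_div_two_sub_mul (m + 1) c)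
      ((integrableOn_pow_mul_exp_neg_sq_div_two_sub_mul m c).const_mul c),
    integral_const_mul, weightedMoment, weightedMoment]

lemma setIntegral_add_mul_pow_succ_mul_exp (k : ℕ) (c : ℝ) :
    ∫ σ in Ioi (0 : ℝ), (σ + c) * σ ^ (k + 1) * exp (-σ ^ 2 / 2 - c * σ)
      = (k + 1) * weightedMoment k c := by
  set f : ℝ → ℝ := fun σ => σ ^ (k + 1) * exp (-σ ^ 2 / 2 - c * σ)
  set f' : ℝ → ℝ := fun σ => (k + 1) * (σ ^ k * exp (-σ ^ 2 / 2 - c * σ))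
      - (σ + c) * σ ^ (k + 1) * exp (-σ ^ 2 / 2 - c * σ)
  have hderiv : ∀ σ ∈ Ici (0 : ℝ), HasDerivAt f (f' σ) σ := by
    intro σ _
    have hexponent : HasDerivAt (fun σ : ℝ => -σ ^ 2 / 2 - c * σ) (-σ - c) σ :=
      (((hasDerivAt_pow 2 σ).neg.div_const 2).sub ((hasDerivAt_id σ).const_mul c)).congr_deriv
        (by norm_num [neg_div])
    refine ((hasDerivAt_pow (k + 1) σ).mul hexponent.exp).congr_deriv ?_
    simp only [f', Nat.add_sub_cancel]
    push_cast
    ring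
  have hint : IntegrableOn f' (Ioi 0) :=
    ((integrableOn_pow_mul_exp_neg_sq_div_two_sub_mul k c).const_mul _).sub
      (integrableOn_add_mul_pow_mul_exp (k + 1) c)
  have hFTC := integral_Ioi_of_hasDerivAt_of_tendsto' hderiv hint
    (tendsto_pow_mul_exp_neg_sq_div_two_sub_mul_atTop (k + 1) c)
  rw [integral_sub ((integrableOn_pow_mul_exp_neg_sq_div_two_sub_mul k c).const_mul _)
    (integrableOn_add_mul_pow_mul_exp (k + 1) c), integral_const_mul] at hFTC
  simp only [f, zero_pow (Nat.succ_ne_zero k), zero_mul, sub_zero] at hFTC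
  rw [weightedMoment]
  linarith

lemma I_eq_weightedMoment_div_factorial {l r n : ℕ} (c : ℝ) (h : 2 * l - r - 1 = n + 1) :
    I l r c = c ^ (r - 1) * weightedMoment n c / n ! := by
  rw [I, h, setIntegral_add_mul_pow_succ_mul_exp, Nat.factorial_succ]
  push_cast
  field_simp

lemma I_eq_weightedMoment_add {l r n : ℕ} (c : ℝ) (h : 2 * l - r - 1 = n) :
    I l r c = c ^ (r - 1) * (weightedMoment (n + 1) c + c * weightedMoment n c) / n ! := by
  rw [I, h, setIntegral_add_mul_pow_mul_exp]
  ring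

theorem stmt14_general (c : ℝ) (l r : ℕ)
    (hr1 : 1 ≤ r) (hrl : r ≤ l - 1) :
    (2 * l - r - 2 : ℕ) * I l r c + I l (r + 1) c = I (l - 1) r c := by
  obtain ⟨m, hm⟩ : ∃ m, 2 * l - r - 2 = m + 1 := ⟨2 * l - r - 3, by omega⟩
  rw [hm, I_eq_weightedMoment_div_factorial c (n := m + 1) (by omega),
    I_eq_weightedMoment_div_factorial c (n := m) (by omega),
    I_eq_weightedMoment_add c (n := m) (by omega), Nat.factorial_succ, Nat.add_sub_cancel,
    ← pow_sub_one_mul (by omega : r ≠ 0)]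
  push_cast
  field_simp

theorem stmt14 (c : ℝ) (hc : 0 < c) (l r : ℕ) (hl : 2 ≤ l)
    (hr1 : 1 ≤ r) (hrl : r ≤ l - 1) :
    (2 * l - r - 2 : ℕ) * I l r c + I l (r + 1) c = I (l - 1) r c :=
  stmt14_general c l r hr1 hrl
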